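/- Let k* be the minimal k such that the k-nearest-neighbor graph on X is connected. Then k* ≤ |X|/2. -/

import Mathlib

open Finset

variable {X : Type*} [MetricSpace X] [Fintype X] [LinearOrder X]

/-- Tie-breaking key: `y` is compared to other points by distance to `x`,
with ties broken by the fixed linear order on `X`. -/
noncomputable def nnKey (x y : X) : ℝ ×ₗ X := toLex (dist x y, y)

noncomputable instance nnKeyDec (x : X) :
    DecidableRel (fun y z : X => nnKey x y ≤ nnKey x z) :=
  fun _ _ => Classical.dec _

instance (x : X) : IsTrans X (fun y z => nnKey x y ≤ nnKey x z) :=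
  ⟨fun _ _ _ h1 h2 => le_trans h1 h2⟩

instance (x : X) : IsAntisymm X (fun y z => nnKey x y ≤ nnKey x z) :=
  ⟨fun a b h1 h2 => by
    have h := le_antisymm h1 h2
    simpa [nnKey] using congrArg (fun p => (ofLex p).2) h⟩

instance (x : X) : IsTotal X (fun y z => nnKey x y ≤ nnKey x z) :=
  ⟨fun _ _ => le_total _ _⟩

/-- The points of `X \ {x}` listed in order of increasing distance to `x`
(ties broken by the fixed linear order). -/
noncomputable def nnList (x : X) : List X :=
  (Finset.univ.erase x).sort (fun y z => nnKey x y ≤ nnKey x z)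

/-- `nbhd k x` is the set `N_k(x)` of the `k` nearest neighbors of `x`. -/
noncomputable def nbhd (k : ℕ) (x : X) : Finset X :=
  ((nnList x).take k).toFinset

/-- The `k`-nearest-neighbor graph: `x — y` iff `y ∈ N_k(x)` or `x ∈ N_k(y)`. -/
noncomputable def nnGraph (k : ℕ) : SimpleGraph X where
  Adj x y := x ≠ y ∧ (y ∈ nbhd k x ∨ x ∈ nbhd k y)
  symm := by
    constructor
    intro x y h
    exact ⟨h.1.symm, h.2.symm⟩
  loopless := by constructor; intro x h; exact h.1 rfl

/-- The cluster (connected component of the `k`-NN graph) containing `x`. -/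
noncomputable def nnCluster (k : ℕ) (x : X) : Finset X := by
  classical
  exact Finset.univ.filter (fun y => (nnGraph (X := X) k).Reachable x y)

/-- The partition of `X` into connected components of the `k`-NN graph:
the maximal `k`-NN clustering. -/
noncomputable def maxClusters (k : ℕ) : Finset (Finset X) :=
  Finset.univ.image (nnCluster (X := X) k)

/-- A partition of `X` each of whose cells contains the `k` nearest
neighbors of all of its elements. -/
def IsKNNClustering (k : ℕ) (P : Finset (Finset X)) : Prop :=
  (∀ C ∈ P, C.Nonempty) ∧
  (∀ C ∈ P, ∀ D ∈ P, C ≠ D → Disjoint C D) ∧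
  (P.sup id = Finset.univ) ∧
  (∀ C ∈ P, ∀ x ∈ C, nbhd k x ⊆ C)

/-- All pairwise distances are distinct (for distinct unordered pairs). -/
def DistinctDists (X : Type*) [MetricSpace X] : Prop :=
  ∀ x y x' y' : X, x ≠ y → x' ≠ y' → dist x y = dist x' y' →
    (x = x' ∧ y = y') ∨ (x = y' ∧ y = x')

/-- The nearest neighbor of `x` (meaningful when `|X| ≥ 2`). -/
noncomputable def nn (x : X) : X := ((nnList x).head?).getD x

/-! If the `(k*-1)`-NN graph is disconnected, each of its components contains some point
together with its `k*-1` nearest neighbours, hence has at least `k*` points (or all of `X`,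
which is impossible for one of two disjoint components). Two disjoint components then give
`2 k* ≤ |X|`. -/

lemma card_nbhd (k : ℕ) (x : X) : (nbhd k x).card = min k (Fintype.card X - 1) := by
  have hnodup : ((nnList x).take k).Nodup :=
    (Finset.sort_nodup _ _).sublist (List.take_sublist _ _)
  rw [nbhd, List.toFinset_card_of_nodup hnodup, List.length_take, nnList, Finset.length_sort,
    Finset.card_erase_of_mem (Finset.mem_univ x), Finset.card_univ]

lemma ne_of_mem_nbhd {k : ℕ} {x y : X} (h : y ∈ nbhd k x) : y ≠ x :=
  Finset.ne_of_mem_erase <| (Finset.mem_sort _).mp <|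
    List.mem_of_mem_take <| List.mem_toFinset.mp h

lemma mem_nnCluster {k : ℕ} {x y : X} : y ∈ nnCluster k x ↔ (nnGraph k).Reachable x y := by
  simp [nnCluster]

lemma insert_nbhd_subset_nnCluster (k : ℕ) (x : X) : insert x (nbhd k x) ⊆ nnCluster k x := by
  intro y hy
  rw [mem_nnCluster]
  rcases Finset.mem_insert.mp hy with rfl | hy
  · exact .refl _
  · exact SimpleGraph.Adj.reachable ⟨(ne_of_mem_nbhd hy).symm, .inl hy⟩

lemma min_add_one_le_card_nnCluster (k : ℕ) (x : X) :
    min k (Fintype.card X - 1) + 1 ≤ (nnCluster k x).card := by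
  rw [← card_nbhd, ← Finset.card_insert_of_notMem fun h => ne_of_mem_nbhd h rfl]
  exact Finset.card_le_card (insert_nbhd_subset_nnCluster k x)

lemma disjoint_nnCluster {k : ℕ} {x z : X} (h : ¬ (nnGraph k).Reachable x z) :
    Disjoint (nnCluster k x) (nnCluster k z) :=
  Finset.disjoint_left.mpr fun _ hx hz =>
    h ((mem_nnCluster.mp hx).trans (mem_nnCluster.mp hz).symm)

lemma two_mul_add_one_le_card_of_not_preconnected {k : ℕ}
    (h : ¬ (nnGraph (X := X) k).Preconnected) : 2 * (k + 1) ≤ Fintype.card X := by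
  obtain ⟨x, z, hxz⟩ : ∃ x z : X, ¬ (nnGraph k).Reachable x z := by
    simpa [SimpleGraph.Preconnected] using h
  have hsum : (nnCluster k x).card + (nnCluster k z).card ≤ Fintype.card X := by
    rw [← Finset.card_union_of_disjoint (disjoint_nnCluster hxz)]
    exact Finset.card_le_univ _
  have hx := min_add_one_le_card_nnCluster k x
  have hz := min_add_one_le_card_nnCluster k z
  have hpos : 0 < Fintype.card X := Fintype.card_pos_iff.mpr ⟨x⟩
  omega

theorem kstar_le_half_general (kstar : ℕ)
    (hconn : (nnGraph (X := X) kstar).Connected)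
    (hmin : ∀ j < kstar, ¬ (nnGraph (X := X) j).Connected) :
    kstar ≤ Fintype.card X / 2 := by
  obtain rfl | hpos := Nat.eq_zero_or_pos kstar
  · exact Nat.zero_le _
  have : Nonempty X := hconn.nonempty
  have hdisc : ¬ (nnGraph (X := X) (kstar - 1)).Preconnected := fun hpre =>
    hmin (kstar - 1) (by omega) ⟨hpre⟩
  have hcard := two_mul_add_one_le_card_of_not_preconnected hdisc
  omega

/-- the minimal `k*` with connected k-NN graph satisfies k* ≤ |X|/2. -/
theorem kstar_le_half (h2 : 2 ≤ Fintype.card X) (kstar : ℕ)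
    (hconn : (nnGraph (X := X) kstar).Connected)
    (hmin : ∀ j < kstar, ¬ (nnGraph (X := X) j).Connected) :
    kstar ≤ Fintype.card X / 2 :=
  kstar_le_half_general kstar hconn hmin
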